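/- Let X : J × Ω → ℝ be jointly measurable with X ∈ L²(J × Ω, m × P), E(X_t) = 0, and covariance kernel K(s,t) = E(X_s X_t) continuous with Mercer data (λ_k, φ_k), λ_k > 0. Define Z_k(ω) = λ_k^{-1/2} ∫_J φ_k(t) X(t,ω) dt. Then E(Z_j Z_k) = δ_{jk} and E(Z_k) = 0. -/

import Mathlib

/-!
With `Y_k = ∫_J φ_k X_t dt`, the function `(s, t, ω) ↦ φ_j(s) X_s(ω) φ_k(t) X_t(ω)` is integrable
on `J × J × Ω`, being a product of two `L²` functions, so Fubini gives
`E(Y_j Y_k) = ∬ φ_j(s) K(s,t) φ_k(t) ds dt = λ_k ⟨φ_j, φ_k⟩ = λ_k δ_{jk}`.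
Fubini on `J × Ω` likewise gives `E(Y_k) = ∫ φ_k(t) E(X_t) dt = 0`.
-/

open MeasureTheory Function
open scoped ENNReal

theorem ContinuousOn.memLp_top_restrict {X E : Type*} [TopologicalSpace X] [MeasurableSpace X]
    [OpensMeasurableSpace X] [NormedAddCommGroup E] [SecondCountableTopologyEither X E]
    {f : X → E} {s : Set X}
    (hf : ContinuousOn f s) (hs : IsCompact s) (hsm : MeasurableSet s) (μ : Measure X) :
    MemLp f ∞ (μ.restrict s) := by
  obtain ⟨C, hC⟩ := hs.exists_bound_of_continuousOn hf
  exact memLp_top_of_bound (hf.aestronglyMeasurable hsm) C (ae_restrict_of_forall_mem hsm hC)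

namespace MeasureTheory

variable {α β γ Ω ε : Type*} [MeasurableSpace α] [MeasurableSpace β] [MeasurableSpace γ]
  [MeasurableSpace Ω] [TopologicalSpace ε] [ContinuousENorm ε] {p : ℝ≥0∞}

theorem MemLp.comp_prodMap_id {F : α × Ω → ε} {f : β → α} {ν : Measure β} {P : Measure Ω}
    [SFinite ν] [SFinite P] (hF : MemLp F p ((ν.map f).prod P)) (hf : Measurable f) :
    MemLp (fun q : β × Ω => F (f q.1, q.2)) p (ν.prod P) := by
  rw [← Measure.map_id (μ := P), Measure.map_prod_map ν P hf measurable_id] at hF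
  exact hF.comp_of_map (hf.prodMap measurable_id).aemeasurable

theorem MemLp.comp_fst_prodMap {F : α × Ω → ε} {μ : Measure α} {P : Measure Ω}
    [SFinite μ] [SFinite P] (hF : MemLp F p (μ.prod P)) (ν : Measure γ) [IsFiniteMeasure ν] :
    MemLp (fun q : (α × γ) × Ω => F (q.1.1, q.2)) p ((μ.prod ν).prod P) := by
  refine MemLp.comp_prodMap_id ?_ measurable_fst
  rw [Measure.map_fst_prod, Measure.prod_smul_left]
  exact hF.smul_measure (measure_ne_top ν _)

theorem MemLp.comp_snd_prodMap {F : α × Ω → ε} {μ : Measure α} {P : Measure Ω}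
    [SFinite μ] [SFinite P] (hF : MemLp F p (μ.prod P)) (ν : Measure γ) [IsFiniteMeasure ν] :
    MemLp (fun q : (γ × α) × Ω => F (q.1.2, q.2)) p ((ν.prod μ).prod P) := by
  refine MemLp.comp_prodMap_id ?_ measurable_snd
  rw [Measure.map_snd_prod, Measure.prod_smul_left]
  exact hF.smul_measure (measure_ne_top ν _)

section Covariance

variable {μ : Measure α} {P : Measure Ω}

theorem integral_mul_integral_eq_integral_integral_integral [IsFiniteMeasure μ] [SigmaFinite P]
    {A B : α → Ω → ℝ} (hA : MemLp (uncurry A) 2 (μ.prod P)) (hB : MemLp (uncurry B) 2 (μ.prod P)) :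
    ∫ ω, (∫ s, A s ω ∂μ) * (∫ t, B t ω ∂μ) ∂P = ∫ s, ∫ t, ∫ ω, A s ω * B t ω ∂P ∂μ ∂μ := by
  have hG : Integrable (fun q : (α × α) × Ω => A q.1.1 q.2 * B q.1.2 q.2)
      ((μ.prod μ).prod P) :=
    (hA.comp_fst_prodMap μ).integrable_mul (hB.comp_snd_prodMap μ)
  calc ∫ ω, (∫ s, A s ω ∂μ) * (∫ t, B t ω ∂μ) ∂P
      = ∫ ω, ∫ st, A st.1 ω * B st.2 ω ∂(μ.prod μ) ∂P := by
        congr with ω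
        exact (integral_prod_mul (A · ω) (B · ω)).symm
    _ = ∫ st, ∫ ω, A st.1 ω * B st.2 ω ∂P ∂(μ.prod μ) :=
        integral_integral_swap (f := fun ω (st : α × α) => A st.1 ω * B st.2 ω) hG.swap
    _ = ∫ s, ∫ t, ∫ ω, A s ω * B t ω ∂P ∂μ ∂μ := integral_prod _ hG.integral_prod_left

theorem integral_integral_mul_kernel_of_eigen {K : α → α → ℝ} {f ψ : α → ℝ} {c : ℝ}
    (heig : ∀ᵐ s ∂μ, ∫ t, K s t * ψ t ∂μ = c * ψ s) :
    ∫ s, ∫ t, f s * ψ t * K s t ∂μ ∂μ = c * ∫ s, f s * ψ s ∂μ := by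
  rw [← integral_const_mul]
  refine integral_congr_ae (heig.mono fun s hs => ?_)
  simp only [mul_assoc, integral_const_mul, mul_comm (ψ _), hs]
  ring

end Covariance

end MeasureTheory

theorem KL_coefficients_orthonormal_general
    {Ω : Type*} [MeasureSpace Ω] (P : Measure Ω) [IsProbabilityMeasure P]
    (a b : ℝ)
    (X : ℝ → Ω → ℝ)
    (hXL2 : MemLp (fun p : ℝ × Ω => X p.1 p.2) 2
      ((volume.restrict (Set.Icc a b)).prod P))
    (hXmean : ∀ t ∈ Set.Icc a b, (∫ ω, X t ω ∂P) = 0)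
    (K : ℝ → ℝ → ℝ) (hK : ∀ s t, K s t = ∫ ω, X s ω * X t ω ∂P)
    (lam : ℕ → ℝ) (hpos : ∀ k, 0 < lam k)
    (φ : ℕ → ℝ → ℝ) (hφcont : ∀ k, ContinuousOn (φ k) (Set.Icc a b))
    (hon : ∀ j k, (∫ t in Set.Icc a b, φ j t * φ k t) = if j = k then 1 else 0)
    (heig : ∀ k, ∀ t ∈ Set.Icc a b,
      (∫ s in Set.Icc a b, K t s * φ k s) = lam k * φ k t)
    (Z : ℕ → Ω → ℝ)
    (hZ : ∀ k ω, Z k ω = (Real.sqrt (lam k))⁻¹ * ∫ t in Set.Icc a b, φ k t * X t ω) :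
    (∀ j k, (∫ ω, Z j ω * Z k ω ∂P) = if j = k then 1 else 0) ∧
    (∀ k, (∫ ω, Z k ω ∂P) = 0) := by
  have hφX : ∀ k, MemLp (fun p : ℝ × Ω => φ k p.1 * X p.1 p.2) 2
      ((volume.restrict (Set.Icc a b)).prod P) := fun k =>
    hXL2.mul (((hφcont k).memLp_top_restrict isCompact_Icc measurableSet_Icc _).comp_fst P)
      (p := ∞)
  have hcov : ∀ j k, ∫ ω, (∫ t in Set.Icc a b, φ j t * X t ω) *
      (∫ t in Set.Icc a b, φ k t * X t ω) ∂P = lam k * if j = k then 1 else 0 := fun j k => by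
    rw [integral_mul_integral_eq_integral_integral_integral (hφX j) (hφX k), ← hon j k]
    have hsplit : ∀ s t ω, φ j s * X s ω * (φ k t * X t ω) = φ j s * φ k t * (X s ω * X t ω) :=
      fun _ _ _ => mul_mul_mul_comm ..
    simp_rw [hsplit, integral_const_mul, ← hK]
    exact integral_integral_mul_kernel_of_eigen
      (ae_restrict_of_forall_mem measurableSet_Icc (heig k))
  refine ⟨fun j k => ?_, fun k => ?_⟩
  · simp_rw [hZ, mul_mul_mul_comm, integral_const_mul, hcov]
    split_ifs with hjk
    · subst hjk
      rw [← mul_inv, Real.mul_self_sqrt (hpos j).le, mul_one, inv_mul_cancel₀ (hpos j).ne']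
    · simp
  · have hslice : ∀ t ∈ Set.Icc a b, ∫ ω, φ k t * X t ω ∂P = 0 := fun t ht => by
      rw [integral_const_mul, hXmean t ht, mul_zero]
    simp_rw [hZ, integral_const_mul]
    rw [← integral_integral_swap ((hφX k).integrable one_le_two),
      setIntegral_eq_zero_of_forall_eq_zero hslice, mul_zero]

/-- Karhunen–Loève coefficients: if `X ∈ L²(J × Ω)` is jointly measurable with
mean zero and continuous covariance kernel `K(s,t) = E(X_s X_t)` having Mercer
data `(λ_k, φ_k)` with `λ_k > 0`, then the random variables
`Z_k = λ_k^{-1/2} ∫_J φ_k(t) X_t dt` satisfy `E(Z_j Z_k) = δ_{jk}` and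
`E(Z_k) = 0`. -/
theorem KL_coefficients_orthonormal
    {Ω : Type*} [MeasureSpace Ω] (P : Measure Ω) [IsProbabilityMeasure P]
    (a b : ℝ) (hab : a ≤ b)
    (X : ℝ → Ω → ℝ)
    (hXmeas : Measurable (fun p : ℝ × Ω => X p.1 p.2))
    (hXL2 : MemLp (fun p : ℝ × Ω => X p.1 p.2) 2
      ((volume.restrict (Set.Icc a b)).prod P))
    (hXmean : ∀ t ∈ Set.Icc a b, (∫ ω, X t ω ∂P) = 0)
    (K : ℝ → ℝ → ℝ) (hK : ∀ s t, K s t = ∫ ω, X s ω * X t ω ∂P)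
    (hKcont : ContinuousOn (fun p : ℝ × ℝ => K p.1 p.2)
      (Set.Icc a b ×ˢ Set.Icc a b))
    (lam : ℕ → ℝ) (hpos : ∀ k, 0 < lam k)
    (φ : ℕ → ℝ → ℝ) (hφcont : ∀ k, ContinuousOn (φ k) (Set.Icc a b))
    (hon : ∀ j k, (∫ t in Set.Icc a b, φ j t * φ k t) = if j = k then 1 else 0)
    (heig : ∀ k, ∀ t ∈ Set.Icc a b,
      (∫ s in Set.Icc a b, K t s * φ k s) = lam k * φ k t)
    (Z : ℕ → Ω → ℝ)
    (hZ : ∀ k ω, Z k ω = (Real.sqrt (lam k))⁻¹ * ∫ t in Set.Icc a b, φ k t * X t ω) :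
    (∀ j k, (∫ ω, Z j ω * Z k ω ∂P) = if j = k then 1 else 0) ∧
    (∀ k, (∫ ω, Z k ω ∂P) = 0) :=
  KL_coefficients_orthonormal_general P a b X hXL2 hXmean K hK lam hpos φ hφcont hon heig Z hZ
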